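/- Let f : ℝ → ℝ be concave and monotone (nondecreasing) on [0,∞) with f(0) ≥ 0 and f(x) > 0 for all x > 0. Let m be a positive natural number, s : Fin m → ℝ with s i > 0 for all i, and θ a real number with 0 < θ ≤ 1. Define, for a weight function w : Fin m → ℝ, N_θ(w) as the minimum cardinality of a subset K ⊆ Fin m such that ∑_{i ∈ K} w i ≥ θ · ∑_i w i. Then N_θ(fun i => f (s i)) ≥ N_θ(s). -/

import Mathlib

open Finset

/-- The fraction-`θ` Nakamoto coefficient of a weight function `w` on `m` validators:
the minimum cardinality of a subset of validators whose cumulative weight is at least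
the fraction `θ` of the total weight. -/
noncomputable def nakamotoCoeff (m : ℕ) (θ : ℝ) (w : Fin m → ℝ) : ℕ :=
  sInf {n : ℕ | ∃ K : Finset (Fin m), K.card = n ∧ θ * ∑ i, w i ≤ ∑ i ∈ K, w i}

/-!
Let `K` realise `N_θ(f ∘ s)` and let `T` be a set of the same size of validators with the
largest stakes. As `f` is monotone, `T` carries at least as much reweighted stake as `K`.
As `f` is concave with `f 0 ≥ 0`, `f x / x` is nonincreasing, so the ratio `f (s i) / s i` is
smaller on `T` than off it; hence the share of `T` in the total is at least as large under `s`
as under `f ∘ s`, and `T` witnesses `N_θ(s) ≤ |T|`.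
-/

lemma ConcaveOn.antitoneOn_div_self {𝕜 : Type*} [Field 𝕜] [LinearOrder 𝕜]
    [IsStrictOrderedRing 𝕜] {f : 𝕜 → 𝕜} (hf : ConcaveOn 𝕜 (Set.Ici 0) f) (hf0 : 0 ≤ f 0) :
    AntitoneOn (fun x => f x / x) (Set.Ioi 0) := by
  intro x (hx : 0 < x) y (hy : 0 < y) hxy
  have hslope := hf.antitoneOn_slope_gt Set.self_mem_Ici ⟨hx.le, hx⟩ ⟨hy.le, hy⟩ hxy
  simp only [slope_def_field, sub_zero] at hslope
  rw [div_le_div_iff₀ hy hx] at hslope ⊢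
  nlinarith

def IsTopSet {ι α : Type*} [LE α] (w : ι → α) (T : Finset ι) : Prop :=
  ∀ i ∈ T, ∀ j ∉ T, w j ≤ w i

lemma exists_isTopSet_card_eq {ι α : Type*} [Fintype ι] [LinearOrder α] (w : ι → α) {n : ℕ}
    (hn : n ≤ Fintype.card ι) : ∃ T : Finset ι, IsTopSet w T ∧ T.card = n := by
  classical
  induction n with
  | zero => exact ⟨∅, fun i hi => absurd hi (notMem_empty i), card_empty⟩
  | succ n ih =>
    obtain ⟨T, hT, rfl⟩ := ih (by omega)
    have hTc : Tᶜ.Nonempty := by rw [← card_pos, card_compl]; omega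
    obtain ⟨j, hj, hjmax⟩ := exists_max_image Tᶜ w hTc
    refine ⟨insert j T, ?_, card_insert_of_notMem (mem_compl.1 hj)⟩
    intro i hi k hk
    rw [mem_insert, not_or] at hk
    rcases mem_insert.1 hi with rfl | hi
    · exact hjmax k (mem_compl.2 hk.2)
    · exact hT i hi k hk.2

lemma IsTopSet.monotoneOn_comp {ι α β : Type*} [Preorder α] [Preorder β] {w : ι → α}
    {T : Finset ι} {φ : α → β} {S : Set α} (hT : IsTopSet w T) (hφ : MonotoneOn φ S)
    (hw : ∀ i, w i ∈ S) : IsTopSet (φ ∘ w) T :=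
  fun i hi j hj => hφ (hw j) (hw i) (hT i hi j hj)

lemma Finset.sum_le_sum_of_card_eq_of_forall_le {ι β : Type*} [AddCommMonoid β] [LinearOrder β]
    [IsOrderedAddMonoid β] {w : ι → β} {A B : Finset ι} (hcard : A.card = B.card)
    (hle : ∀ a ∈ A, ∀ b ∈ B, w a ≤ w b) : ∑ a ∈ A, w a ≤ ∑ b ∈ B, w b := by
  rcases B.eq_empty_or_nonempty with rfl | hB
  · rw [card_empty, card_eq_zero] at hcard
    rw [hcard]
  obtain ⟨b₀, hb₀, hb₀min⟩ := exists_min_image B w hB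
  calc ∑ a ∈ A, w a ≤ A.card • w b₀ := sum_le_card_nsmul A w _ fun a ha => hle a ha b₀ hb₀
    _ = B.card • w b₀ := by rw [hcard]
    _ ≤ ∑ b ∈ B, w b := card_nsmul_le_sum B w _ hb₀min

lemma IsTopSet.sum_le_sum {ι β : Type*} [AddCommMonoid β] [LinearOrder β]
    [IsOrderedAddMonoid β] {w : ι → β} {T K : Finset ι} (hT : IsTopSet w T)
    (hcard : K.card = T.card) : ∑ i ∈ K, w i ≤ ∑ i ∈ T, w i := by
  classical
  have hswap : ∑ i ∈ K \ T, w i ≤ ∑ i ∈ T \ K, w i :=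
    sum_le_sum_of_card_eq_of_forall_le (card_sdiff_comm hcard) fun j hj i hi =>
      hT i (mem_sdiff.1 hi).1 j (mem_sdiff.1 hj).2
  rw [← sum_inter_add_sum_sdiff K T, ← sum_inter_add_sum_sdiff T K, inter_comm]
  exact add_le_add_right hswap _

lemma Finset.sum_mul_sum_univ_le_of_forall_mul_le {ι R : Type*} [Fintype ι] [CommSemiring R]
    [PartialOrder R] [IsOrderedRing R] {g s : ι → R} {T : Finset ι}
    (hcross : ∀ i ∈ T, ∀ j ∉ T, g i * s j ≤ g j * s i) :
    (∑ i ∈ T, g i) * ∑ i, s i ≤ (∑ i ∈ T, s i) * ∑ i, g i := by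
  classical
  have hout : (∑ i ∈ T, g i) * ∑ j ∈ Tᶜ, s j ≤ (∑ i ∈ T, s i) * ∑ j ∈ Tᶜ, g j := by
    rw [sum_mul_sum, sum_mul_sum]
    exact sum_le_sum fun i hi => sum_le_sum fun j hj =>
      (hcross i hi j (mem_compl.1 hj)).trans_eq (mul_comm _ _)
  rw [← sum_add_sum_compl T s, ← sum_add_sum_compl T g, mul_add, mul_add, mul_comm (∑ i ∈ T, g i)]
  exact add_le_add_right hout _

lemma mul_sum_le_sum_of_forall_mul_le {ι : Type*} [Fintype ι] {g s : ι → ℝ} {T : Finset ι}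
    {θ : ℝ} (hg : ∀ i, 0 < g i) (hs : ∀ i, 0 ≤ s i)
    (hcross : ∀ i ∈ T, ∀ j ∉ T, g i * s j ≤ g j * s i)
    (hθ : θ * ∑ i, g i ≤ ∑ i ∈ T, g i) : θ * ∑ i, s i ≤ ∑ i ∈ T, s i := by
  rcases isEmpty_or_nonempty ι with hι | hι
  · simp [eq_empty_of_isEmpty T]
  have hG : 0 < ∑ i, g i := sum_pos (fun i _ => hg i) univ_nonempty
  refine le_of_mul_le_mul_right ?_ hG
  calc (θ * ∑ i, s i) * ∑ i, g i = (θ * ∑ i, g i) * ∑ i, s i := by ring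
    _ ≤ (∑ i ∈ T, g i) * ∑ i, s i := mul_le_mul_of_nonneg_right hθ (sum_nonneg fun i _ => hs i)
    _ ≤ (∑ i ∈ T, s i) * ∑ i, g i := sum_mul_sum_univ_le_of_forall_mul_le hcross

lemma nakamotoCoeff_le_card {m : ℕ} {θ : ℝ} {w : Fin m → ℝ} {K : Finset (Fin m)}
    (hK : θ * ∑ i, w i ≤ ∑ i ∈ K, w i) : nakamotoCoeff m θ w ≤ K.card :=
  Nat.sInf_le ⟨K, rfl, hK⟩

lemma exists_card_eq_nakamotoCoeff {m : ℕ} {θ : ℝ} {w : Fin m → ℝ} (hθ : θ ≤ 1)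
    (hw : 0 ≤ ∑ i, w i) :
    ∃ K : Finset (Fin m), K.card = nakamotoCoeff m θ w ∧ θ * ∑ i, w i ≤ ∑ i ∈ K, w i :=
  Nat.sInf_mem (s := {n | ∃ K : Finset (Fin m), K.card = n ∧ θ * ∑ i, w i ≤ ∑ i ∈ K, w i})
    ⟨_, univ, rfl, mul_le_of_le_one_left hw hθ⟩

theorem concave_reweighting_nakamoto_ge_general (f : ℝ → ℝ)
    (hconc : ConcaveOn ℝ (Set.Ici (0 : ℝ)) f)
    (hmono : MonotoneOn f (Set.Ici (0 : ℝ)))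
    (hf0 : 0 ≤ f 0) (hfpos : ∀ x : ℝ, 0 < x → 0 < f x)
    (m : ℕ) (s : Fin m → ℝ) (hs : ∀ i, 0 < s i)
    (θ : ℝ) (hθ1 : θ ≤ 1) :
    nakamotoCoeff m θ s ≤ nakamotoCoeff m θ (fun i => f (s i)) := by
  set g : Fin m → ℝ := fun i => f (s i)
  have hg : ∀ i, 0 < g i := fun i => hfpos _ (hs i)
  obtain ⟨K, hK, hKg⟩ := exists_card_eq_nakamotoCoeff hθ1 (sum_nonneg fun i _ => (hg i).le)
  obtain ⟨T, hT, hTK⟩ := exists_isTopSet_card_eq s K.card_le_univ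
  have hTg : IsTopSet g T := hT.monotoneOn_comp hmono fun i => (hs i).le
  have hcross : ∀ i ∈ T, ∀ j ∉ T, g i * s j ≤ g j * s i := fun i hi j hj =>
    (div_le_div_iff₀ (hs i) (hs j)).1 (hconc.antitoneOn_div_self hf0 (hs j) (hs i) (hT i hi j hj))
  rw [← hK, ← hTK]
  exact nakamotoCoeff_le_card <| mul_sum_le_sum_of_forall_mul_le hg (fun i => (hs i).le) hcross
    (hKg.trans (hTg.sum_le_sum hTK.symm))

/-- Any concave, nondecreasing reweighting `f` on `[0, ∞)` with `f 0 ≥ 0` and `f > 0`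
on positives weakly increases the fraction-`θ` Nakamoto coefficient. -/
theorem concave_reweighting_nakamoto_ge (f : ℝ → ℝ)
    (hconc : ConcaveOn ℝ (Set.Ici (0 : ℝ)) f)
    (hmono : MonotoneOn f (Set.Ici (0 : ℝ)))
    (hf0 : 0 ≤ f 0) (hfpos : ∀ x : ℝ, 0 < x → 0 < f x)
    (m : ℕ) (hm : 0 < m) (s : Fin m → ℝ) (hs : ∀ i, 0 < s i)
    (θ : ℝ) (hθ : 0 < θ) (hθ1 : θ ≤ 1) :
    nakamotoCoeff m θ s ≤ nakamotoCoeff m θ (fun i => f (s i)) :=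
  concave_reweighting_nakamoto_ge_general f hconc hmono hf0 hfpos m s hs θ hθ1
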